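/- arXiv:0708.3451 — 7 statements merged into one kernel-verified Lean document; each statement's English description precedes it below -/
import Mathlib

section
/- Let k be a field of characteristic 0 and let f, g ∈ k(t) be rational functions satisfying f³ + g³ = 1. Then f and g are constant, i.e. there exist a, b ∈ k with f = C(a) and g = C(b). -/
/-!
Write `f = p / q` and `g = r / s` in lowest terms with monic denominators. Clearing denominators
gives `p³ s³ + r³ q³ = q³ s³`, and coprimality forces `q³ ∣ s³` and `s³ ∣ q³`, so `q³ = s³` and
`p³ + r³ = s³`. By the Mason–Stothers theorem (Fermat's last theorem for polynomials, available
since `3 ≠ 0` in `k`), all of `p`, `r`, `s` are constant, hence so are `f` and `g`.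
-/

open Polynomial

theorem IsCoprime.associated_of_mul_add_mul_eq_mul {R : Type*} [CommRing R] [IsDomain R]
    {p q r s : R} (hpq : IsCoprime p q) (hrs : IsCoprime r s) (h : p * s + r * q = q * s) :
    Associated q s := by
  have hq : q ∣ p * s := ⟨s - r, by linear_combination h⟩
  have hs : s ∣ r * q := ⟨q - p, by linear_combination h⟩
  exact associated_of_dvd_dvd (hpq.symm.dvd_of_dvd_mul_left hq) (hrs.symm.dvd_of_dvd_mul_left hs)

namespace Polynomial

variable {k : Type*} [Field k] {n : ℕ}

theorem natDegree_eq_zero_of_pow_add_pow_eq_pow (hn : 3 ≤ n) (chn : (n : k) ≠ 0)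
    {a b c : k[X]} (hc : c ≠ 0) (hab : IsCoprime a b) (heq : a ^ n + b ^ n = c ^ n) :
    a.natDegree = 0 ∧ b.natDegree = 0 ∧ c.natDegree = 0 := by
  have hn0 : n ≠ 0 := by omega
  by_cases ha : a = 0
  · subst ha
    have hbu : IsUnit b := isCoprime_zero_left.mp hab
    have hcu : IsUnit c := (isUnit_pow_iff hn0).mp <| by
      rw [← heq, zero_pow hn0, zero_add]; exact hbu.pow n
    exact ⟨natDegree_zero, natDegree_eq_zero_of_isUnit hbu, natDegree_eq_zero_of_isUnit hcu⟩
  by_cases hb : b = 0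
  · subst hb
    have hau : IsUnit a := isCoprime_zero_right.mp hab
    have hcu : IsUnit c := (isUnit_pow_iff hn0).mp <| by
      rw [← heq, zero_pow hn0, add_zero]; exact hau.pow n
    exact ⟨natDegree_eq_zero_of_isUnit hau, natDegree_zero, natDegree_eq_zero_of_isUnit hcu⟩
  exact flt hn chn ha hb hc hab heq

end Polynomial

namespace RatFunc

variable {k : Type*} [Field k]

theorem exists_eq_C_of_natDegree_eq_zero {x : RatFunc k} (hnum : x.num.natDegree = 0)
    (hdenom : x.denom.natDegree = 0) : ∃ a, x = C a := by
  have hx := num_div_denom x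
  rw [x.monic_denom.natDegree_eq_zero.mp hdenom, map_one, div_one,
    eq_C_of_natDegree_eq_zero hnum, algebraMap_C] at hx
  exact ⟨_, hx.symm⟩

theorem num_pow_mul_denom_pow_add_num_pow_mul_denom_pow {n : ℕ} {f g : RatFunc k}
    (h : f ^ n + g ^ n = 1) :
    f.num ^ n * g.denom ^ n + g.num ^ n * f.denom ^ n = f.denom ^ n * g.denom ^ n := by
  apply algebraMap_injective k
  have hq := algebraMap_ne_zero f.denom_ne_zero
  have hs := algebraMap_ne_zero g.denom_ne_zero
  rw [← num_div_denom f, ← num_div_denom g, div_pow, div_pow,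
    div_add_div _ _ (pow_ne_zero n hq) (pow_ne_zero n hs),
    div_eq_one_iff_eq (mul_ne_zero (pow_ne_zero n hq) (pow_ne_zero n hs))] at h
  simpa only [map_add, map_mul, map_pow, mul_comm] using h

theorem exists_eq_C_of_pow_add_pow_eq_one {n : ℕ} (hn : 3 ≤ n) (chn : (n : k) ≠ 0)
    {f g : RatFunc k} (h : f ^ n + g ^ n = 1) : (∃ a, f = C a) ∧ ∃ b, g = C b := by
  have hn0 : n ≠ 0 := by omega
  have hcleared := num_pow_mul_denom_pow_add_num_pow_mul_denom_pow h
  have hdenom : f.denom ^ n = g.denom ^ n :=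
    eq_of_monic_of_associated (f.monic_denom.pow n) (g.monic_denom.pow n)
      (f.isCoprime_num_denom.pow.associated_of_mul_add_mul_eq_mul g.isCoprime_num_denom.pow
        hcleared)
  have heq : f.num ^ n + g.num ^ n = g.denom ^ n := by
    refine mul_left_cancel₀ (pow_ne_zero n g.denom_ne_zero) ?_
    linear_combination hcleared + (g.denom ^ n - g.num ^ n) * hdenom
  have hcop : IsCoprime f.num g.num := by
    have := (f.isCoprime_num_denom.pow (m := n) (n := n)).add_mul_left_right (-1)
    rw [hdenom, ← heq, mul_neg_one, add_neg_cancel_comm] at this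
    exact IsCoprime.pow_iff (Nat.pos_of_ne_zero hn0) (Nat.pos_of_ne_zero hn0) |>.mp this
  obtain ⟨hp, hr, hs⟩ :=
    natDegree_eq_zero_of_pow_add_pow_eq_pow hn chn g.denom_ne_zero hcop heq
  have hq : f.denom.natDegree = 0 := by
    simpa [natDegree_pow, hn0, hs] using congrArg natDegree hdenom
  exact ⟨exists_eq_C_of_natDegree_eq_zero hp hq, exists_eq_C_of_natDegree_eq_zero hr hs⟩

end RatFunc

theorem fermat_cubic_constant (k : Type*) [Field k] [CharZero k]
    (f g : RatFunc k) (h : f ^ 3 + g ^ 3 = 1) :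
    ∃ a b : k, f = RatFunc.C a ∧ g = RatFunc.C b := by
  obtain ⟨⟨a, rfl⟩, ⟨b, rfl⟩⟩ :=
    RatFunc.exists_eq_C_of_pow_add_pow_eq_one le_rfl (by norm_num : ((3 : ℕ) : k) ≠ 0) h
  exact ⟨a, b, rfl, rfl⟩
end

section
/- Let k be an algebraically closed field of characteristic 0 and let n ≥ 1. Then for a rational function f ∈ k(t) the following are equivalent: (i) there exist x₁, y₁, …, x_n, y_n ∈ k(t) with x_i³ + y_i³ = 1 for all i and f = x₁ + x₂·t + ⋯ + x_n·t^{n−1}; (ii) f is (the image in k(t) of) a polynomial in k[t] of degree at most n − 1. In particular, the set of polynomials of degree at most n − 1 is a diophantine subset of k(t). -/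
/-- A subset `D` of a commutative ring `R` is *diophantine* if there are finitely many
polynomials `F i` in variables `x, y₁, …, y_n` with coefficients in `R` such that
`r ∈ D` iff the system `F i (r, y₁, …, y_n) = 0` has a solution in `R`. -/
def IsDiophantine {R : Type*} [CommRing R] (D : Set R) : Prop :=
  ∃ (m n : ℕ) (F : Fin m → MvPolynomial (Fin (n + 1)) R),
    ∀ r : R, r ∈ D ↔ ∃ y : Fin n → R,
      ∀ i : Fin m, MvPolynomial.eval (Fin.cons r y) (F i) = 0

/-!
By Fermat's Last Theorem for polynomials (a consequence of Mason–Stothers), every point of the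
Fermat curve `x ^ m + y ^ m = 1` over `k(t)` is constant when `3 ≤ m` and `char k ∤ m`; over an
algebraically closed `k` every constant `x` lies on such a point. Hence the sums
`∑ xᵢ tⁱ` with `xᵢ` on the cubic Fermat curve are exactly the polynomials of degree `< n`, and this
description is visibly diophantine.
-/

open scoped Polynomial

namespace RatFunc

variable {k : Type*} [Field k]

theorem exists_eq_C_of_isAlgebraic {x : RatFunc k} (hx : IsAlgebraic k x) : ∃ c, x = C c := by
  by_contra h
  exact x.transcendental_of_ne_C h hx

theorem exists_common_denom (x y : RatFunc k) :
    ∃ a b c : k[X], c ≠ 0 ∧ x = algebraMap k[X] (RatFunc k) a / algebraMap k[X] (RatFunc k) c ∧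
      y = algebraMap k[X] (RatFunc k) b / algebraMap k[X] (RatFunc k) c := by
  refine ⟨x.num * y.denom, y.num * x.denom, x.denom * y.denom,
    mul_ne_zero x.denom_ne_zero y.denom_ne_zero, ?_, ?_⟩
  · rw [map_mul, map_mul, mul_div_mul_right _ _ (algebraMap_ne_zero y.denom_ne_zero),
      num_div_denom]
  · rw [map_mul, map_mul, mul_comm (algebraMap _ _ x.denom),
      mul_div_mul_right _ _ (algebraMap_ne_zero x.denom_ne_zero), num_div_denom]

theorem exists_eq_C_of_pow_add_pow_eq_one_s8 {m : ℕ} (hm : 3 ≤ m) (hchar : (m : k) ≠ 0)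
    {x y : RatFunc k} (h : x ^ m + y ^ m = 1) : ∃ c, x = C c := by
  rcases eq_or_ne y 0 with rfl | hy
  · -- `k` is algebraically closed in `k(t)`
    refine exists_eq_C_of_isAlgebraic
      ⟨Polynomial.X ^ m - Polynomial.C 1, Polynomial.X_pow_sub_C_ne_zero (by omega) 1, ?_⟩
    simpa [zero_pow (by omega : m ≠ 0), sub_eq_zero] using h
  rcases eq_or_ne x 0 with rfl | hx
  · exact ⟨0, (map_zero C).symm⟩
  obtain ⟨a, b, c, hc, rfl, rfl⟩ := exists_common_denom x y
  have hfermat : a ^ m + b ^ m = c ^ m := by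
    rw [div_pow, div_pow, ← add_div,
      div_eq_one_iff_eq (pow_ne_zero _ (algebraMap_ne_zero hc))] at h
    exact algebraMap_injective k (by simpa only [map_add, map_pow] using h)
  obtain ⟨d, a', -, c', ⟨rfl, -, rfl⟩, ha', -, hc'⟩ :=
    fermatLastTheoremWith'_polynomial hm hchar a b c (fun ha ↦ hx (by simp [ha]))
      (fun hb ↦ hy (by simp [hb])) hc hfermat
  obtain ⟨u, -, rfl⟩ := Polynomial.isUnit_iff.mp ha'
  obtain ⟨v, -, rfl⟩ := Polynomial.isUnit_iff.mp hc'
  refine ⟨u / v, ?_⟩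
  rw [map_mul, map_mul, mul_div_mul_right _ _ (algebraMap_ne_zero (right_ne_zero_of_mul hc)),
    algebraMap_C, algebraMap_C, map_div₀]

theorem exists_pow_add_pow_eq_one_iff [IsAlgClosed k] {m : ℕ} (hm : 3 ≤ m) (hchar : (m : k) ≠ 0)
    {x : RatFunc k} : (∃ y, x ^ m + y ^ m = 1) ↔ ∃ c, x = C c := by
  refine ⟨fun ⟨y, h⟩ ↦ exists_eq_C_of_pow_add_pow_eq_one_s8 hm hchar h, ?_⟩
  rintro ⟨c, rfl⟩
  obtain ⟨d, hd⟩ := IsAlgClosed.exists_pow_nat_eq (1 - c ^ m) (n := m) (by omega)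
  exact ⟨C d, by rw [← map_pow, ← map_pow, hd, ← map_add, add_sub_cancel, map_one]⟩

theorem exists_sum_C_mul_X_pow_iff {n : ℕ} {f : RatFunc k} :
    (∃ c : Fin n → k, f = ∑ i : Fin n, C (c i) * X ^ (i : ℕ)) ↔
      ∃ p : k[X], p.degree < n ∧ f = algebraMap k[X] (RatFunc k) p := by
  have hmap (c : Fin n → k) : algebraMap k[X] (RatFunc k)
      (∑ i : Fin n, Polynomial.C (c i) * Polynomial.X ^ (i : ℕ)) =
        ∑ i : Fin n, C (c i) * X ^ (i : ℕ) := by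
    simp only [map_sum, map_mul, map_pow, algebraMap_C, algebraMap_X]
  constructor
  · rintro ⟨c, rfl⟩
    exact ⟨_, Polynomial.degree_sum_fin_lt c, (hmap c).symm⟩
  · rintro ⟨p, hp, rfl⟩
    refine ⟨fun i ↦ p.coeff i, ?_⟩
    rw [← hmap, Polynomial.sum_fin (fun i a ↦ Polynomial.C a * Polynomial.X ^ i) (by simp) hp,
      Polynomial.sum_C_mul_X_pow_eq]

theorem exists_fermat_sum_iff [IsAlgClosed k] {m : ℕ} (hm : 3 ≤ m) (hchar : (m : k) ≠ 0)
    {n : ℕ} {f : RatFunc k} :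
    (∃ x y : Fin n → RatFunc k, (∀ i, x i ^ m + y i ^ m = 1) ∧
        f = ∑ i : Fin n, x i * X ^ (i : ℕ)) ↔
      ∃ c : Fin n → k, f = ∑ i : Fin n, C (c i) * X ^ (i : ℕ) := by
  constructor
  · rintro ⟨x, y, hxy, rfl⟩
    choose c hc using fun i ↦ (exists_pow_add_pow_eq_one_iff hm hchar).mp ⟨y i, hxy i⟩
    exact ⟨c, by simp only [hc]⟩
  · rintro ⟨c, rfl⟩
    choose y hy using fun i ↦ (exists_pow_add_pow_eq_one_iff hm hchar).mpr ⟨c i, rfl⟩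
    exact ⟨fun i ↦ C (c i), y, hy, rfl⟩

end RatFunc

theorem WithBot.le_coe_sub_one_iff_lt {n : ℕ} (hn : 1 ≤ n) {d : WithBot ℕ} :
    d ≤ (n - 1 : ℕ) ↔ d < n := by
  cases d with
  | bot => simp
  | coe d => simp only [Nat.cast_withBot, WithBot.coe_le_coe, WithBot.coe_lt_coe]; omega

open MvPolynomial in
theorem isDiophantine_setOf_fermat_sum {R : Type*} [CommRing R] (m n : ℕ) (t : R) :
    IsDiophantine {f : R | ∃ x y : Fin n → R, (∀ i, x i ^ m + y i ^ m = 1) ∧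
      f = ∑ i : Fin n, x i * t ^ (i : ℕ)} := by
  let xVar (i : Fin n) : Fin (n + n + 1) := (Fin.castAdd n i).succ
  let yVar (i : Fin n) : Fin (n + n + 1) := (Fin.natAdd n i).succ
  refine ⟨n + 1, n + n, Fin.cons (X 0 - ∑ i : Fin n, X (xVar i) * C (t ^ (i : ℕ)))
    (fun i ↦ X (xVar i) ^ m + X (yVar i) ^ m - 1), fun r ↦ ?_⟩
  simp only [Set.mem_ofPred_eq, Fin.forall_fin_succ, Fin.cons_zero, Fin.cons_succ, map_sub,
    map_add, map_sum, map_mul, map_pow, map_one, eval_X, eval_C, xVar, yVar, sub_eq_zero]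
  constructor
  · rintro ⟨x, y, hxy, rfl⟩
    refine ⟨Fin.append x y, by simp only [Fin.append_left], ?_⟩
    simpa only [Fin.append_left, Fin.append_right] using hxy
  · rintro ⟨w, hf, hw⟩
    exact ⟨_, _, hw, hf⟩

theorem fermat_cubic_diophantine_set_algClosed
    (k : Type*) [Field k] [IsAlgClosed k] [CharZero k] (n : ℕ) (hn : 1 ≤ n) :
    (∀ f : RatFunc k,
        (∃ x y : Fin n → RatFunc k,
            (∀ i, x i ^ 3 + y i ^ 3 = 1) ∧
            f = ∑ i : Fin n, x i * RatFunc.X ^ (i : ℕ)) ↔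
        (∃ p : Polynomial k, p.degree ≤ (n - 1 : ℕ) ∧
            f = algebraMap (Polynomial k) (RatFunc k) p)) ∧
    IsDiophantine {f : RatFunc k | ∃ p : Polynomial k, p.degree ≤ (n - 1 : ℕ) ∧
        f = algebraMap (Polynomial k) (RatFunc k) p} := by
  have key (f : RatFunc k) : (∃ p : k[X], p.degree ≤ (n - 1 : ℕ) ∧ f = algebraMap k[X] _ p) ↔
      ∃ x y : Fin n → RatFunc k, (∀ i, x i ^ 3 + y i ^ 3 = 1) ∧
        f = ∑ i : Fin n, x i * RatFunc.X ^ (i : ℕ) := by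
    rw [RatFunc.exists_fermat_sum_iff le_rfl (Nat.cast_ne_zero.mpr three_ne_zero),
      RatFunc.exists_sum_C_mul_X_pow_iff]
    simp only [WithBot.le_coe_sub_one_iff_lt hn]
  refine ⟨fun f ↦ (key f).symm, ?_⟩
  simpa only [key] using isDiophantine_setOf_fermat_sum 3 n (RatFunc.X : RatFunc k)
end

section
/- Let n ≥ 1. Then for a rational function f ∈ ℝ(t) the following are equivalent: (i) there exist x₁, y₁, …, x_n, y_n ∈ ℝ(t) with x_i³ + y_i³ = 1 for all i and f = x₁ + x₂·t + ⋯ + x_n·t^{n−1}; (ii) f is (the image in ℝ(t) of) a polynomial in ℝ[t] of degree at most n − 1. In particular, the set of real polynomials of degree at most n − 1 is a diophantine subset of ℝ(t). -/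
/-!
If `x ^ n + y ^ n = 1` in `K(t)` with `n ≥ 3` and `(n : K) ≠ 0`, clearing denominators gives
`P ^ n + Q ^ n = D ^ n` in `K[t]`, and the polynomial Fermat theorem (via Mason–Stothers) forces
`P` and `D` to be associated, so `x = P / D` is constant. Conversely, if every element of `K` is
an `n`-th power, every constant lies on the curve. So over `ℝ`, where cubes are surjective, the
sums `∑ xᵢ tⁱ` with every `xᵢ` on the cubic Fermat curve are exactly the polynomials of degree
`< n`, and this description is itself a system of polynomial equations in the `xᵢ, yᵢ`.
-/

theorem Real.exists_pow_eq_of_odd {n : ℕ} (hn : Odd n) (a : ℝ) : ∃ b : ℝ, b ^ n = a := by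
  have hc : |a| + 1 ≤ (|a| + 1) ^ n := le_self_pow₀ (by linarith [abs_nonneg a]) hn.pos.ne'
  refine intermediate_value_univ (-(|a| + 1)) (|a| + 1) (continuous_pow n) ⟨?_, ?_⟩
  · rw [hn.neg_pow]
    linarith [neg_abs_le a]
  · linarith [le_abs_self a]

open MvPolynomial in
theorem isDiophantine_setOf_sum_mul_of_pow_add_pow_eq_one {R : Type*} [CommRing R] (m n : ℕ)
    (c : Fin n → R) :
    IsDiophantine
      {f : R | ∃ x y : Fin n → R, (∀ i, x i ^ m + y i ^ m = 1) ∧ f = ∑ i, x i * c i} := by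
  -- variable `0` is `f`, variables `1, …, n` are the `xᵢ` and `n + 1, …, 2n` the `yᵢ`
  refine ⟨n + 1, n + n,
    Fin.snoc (fun i => X (Fin.castAdd n i).succ ^ m + X (Fin.natAdd n i).succ ^ m - 1)
      (X 0 - ∑ i, X (Fin.castAdd n i).succ * C (c i)), fun f => ?_⟩
  simp only [Fin.forall_fin_succ', Fin.snoc_castSucc, Fin.snoc_last, map_sub, map_add, map_pow,
    map_one, map_sum, map_mul, eval_X, eval_C, Fin.cons_succ, Fin.cons_zero, sub_eq_zero]
  rw [(Fin.appendEquiv n n).symm.exists_congr_left]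
  simp only [Equiv.symm_symm, Fin.appendEquiv_apply, Fin.append_left, Fin.append_right,
    Prod.exists, Set.mem_ofPred_eq]

open Polynomial

namespace Polynomial

variable {K : Type*} [Field K]

theorem associated_of_pow_add_pow_eq_pow {n : ℕ} (hn : 3 ≤ n) (hK : (n : K) ≠ 0)
    {a b c : K[X]} (ha : a ≠ 0) (hc : c ≠ 0) (h : a ^ n + b ^ n = c ^ n) : Associated a c := by
  rcases eq_or_ne b 0 with rfl | hb
  · rw [zero_pow (by omega : n ≠ 0), add_zero] at h
    exact (Associated.pow_iff (by omega : n ≠ 0)).mp (by rw [h])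
  · obtain ⟨d, a', -, c', ⟨rfl, -, rfl⟩, ha', -, hc'⟩ :=
      fermatLastTheoremWith'_polynomial hn hK a b c ha hb hc h
    exact (associated_unit_mul_left d a' ha').trans (associated_unit_mul_left d c' hc').symm

theorem exists_eq_sum_C_mul_X_pow_iff_degree_lt {N : ℕ} {p : K[X]} :
    (∃ r : Fin N → K, p = ∑ i, C (r i) * X ^ (i : ℕ)) ↔ p.degree < N := by
  constructor
  · rintro ⟨r, rfl⟩
    refine (degree_sum_le _ _).trans_lt
      ((Finset.sup_lt_iff (WithBot.bot_lt_coe N)).mpr fun i _ => ?_)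
    exact (degree_C_mul_X_pow_le _ _).trans_lt (WithBot.coe_lt_coe.mpr i.isLt)
  · intro hp
    rcases eq_or_ne p 0 with rfl | hp0
    · exact ⟨0, by simp⟩
    refine ⟨fun i => p.coeff i, ?_⟩
    conv_lhs => rw [p.as_sum_range' N ((natDegree_lt_iff_degree_lt hp0).mpr hp)]
    simp [← Fin.sum_univ_eq_sum_range, C_mul_X_pow_eq_monomial]

end Polynomial

namespace RatFunc

variable {K : Type*} [Field K] {n : ℕ}

theorem exists_eq_C_of_pow_add_pow_eq_one_s9 (hn : 3 ≤ n) (hK : (n : K) ≠ 0) {x y : RatFunc K}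
    (h : x ^ n + y ^ n = 1) : ∃ r : K, x = C r := by
  rcases eq_or_ne x 0 with rfl | hx
  · exact ⟨0, by simp⟩
  obtain ⟨⟨D, hD⟩, hint⟩ :=
    IsLocalization.exist_integer_multiples (nonZeroDivisors K[X]) Finset.univ ![x, y]
  obtain ⟨P, hP⟩ := hint 0 (Finset.mem_univ _)
  obtain ⟨Q, hQ⟩ := hint 1 (Finset.mem_univ _)
  simp only [Algebra.smul_def, Matrix.cons_val_zero, Matrix.cons_val_one] at hP hQ
  have hD0 : algebraMap K[X] (RatFunc K) D ≠ 0 := algebraMap_ne_zero (nonZeroDivisors.ne_zero hD)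
  have hP0 : P ≠ 0 := by
    rintro rfl
    simp [hD0, hx] at hP
  have hFermat : P ^ n + Q ^ n = D ^ n := by
    apply algebraMap_injective K
    simp only [map_add, map_pow, hP, hQ]
    linear_combination (algebraMap K[X] (RatFunc K) D) ^ n * h
  obtain ⟨u, hu⟩ := (Polynomial.associated_of_pow_add_pow_eq_pow hn hK hP0
    (nonZeroDivisors.ne_zero hD) hFermat).symm
  obtain ⟨r, -, hr⟩ := Polynomial.isUnit_iff.mp u.isUnit
  refine ⟨r, mul_left_cancel₀ hD0 ?_⟩
  rw [← hP, ← hu, map_mul, ← hr, algebraMap_C]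

theorem exists_pow_add_pow_eq_one_iff_s9 (hn : 3 ≤ n) (hK : (n : K) ≠ 0)
    (hroot : ∀ a : K, ∃ b, b ^ n = a) (x : RatFunc K) :
    (∃ y, x ^ n + y ^ n = 1) ↔ ∃ r : K, x = C r := by
  refine ⟨fun ⟨y, h⟩ => exists_eq_C_of_pow_add_pow_eq_one_s9 hn hK h, ?_⟩
  rintro ⟨r, rfl⟩
  obtain ⟨s, hs⟩ := hroot (1 - r ^ n)
  exact ⟨C s, by rw [← map_pow, ← map_pow, hs, ← map_add, add_sub_cancel, map_one]⟩

theorem exists_sum_mul_X_pow_of_pow_add_pow_eq_one_iff (hn : 3 ≤ n) (hK : (n : K) ≠ 0)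
    (hroot : ∀ a : K, ∃ b, b ^ n = a) {N : ℕ} (f : RatFunc K) :
    (∃ x y : Fin N → RatFunc K, (∀ i, x i ^ n + y i ^ n = 1) ∧ f = ∑ i, x i * X ^ (i : ℕ)) ↔
      ∃ p : K[X], p.degree < N ∧ f = algebraMap K[X] (RatFunc K) p := by
  have hmap (r : Fin N → K) : algebraMap K[X] (RatFunc K) (∑ i, Polynomial.C (r i) *
      Polynomial.X ^ (i : ℕ)) = ∑ i, C (r i) * X ^ (i : ℕ) := by
    simp [algebraMap_C, algebraMap_X]
  calc _ ↔ ∃ r : Fin N → K, f = ∑ i, C (r i) * X ^ (i : ℕ) := by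
        constructor
        · rintro ⟨x, y, hxy, rfl⟩
          choose r hr using fun i =>
            (exists_pow_add_pow_eq_one_iff_s9 hn hK hroot (x i)).mp ⟨y i, hxy i⟩
          exact ⟨r, by simp only [hr]⟩
        · rintro ⟨r, rfl⟩
          choose y hy using fun i =>
            (exists_pow_add_pow_eq_one_iff_s9 hn hK hroot (C (r i))).mpr ⟨r i, rfl⟩
          exact ⟨_, y, hy, rfl⟩
    _ ↔ _ := by
        simp_rw [← Polynomial.exists_eq_sum_C_mul_X_pow_iff_degree_lt, ← hmap]
        exact ⟨fun ⟨r, h⟩ => ⟨_, ⟨r, rfl⟩, h⟩, fun ⟨_, ⟨r, rfl⟩, h⟩ => ⟨r, h⟩⟩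

end RatFunc

theorem fermat_cubic_diophantine_set_real (n : ℕ) (hn : 1 ≤ n) :
    (∀ f : RatFunc ℝ,
        (∃ x y : Fin n → RatFunc ℝ,
            (∀ i, x i ^ 3 + y i ^ 3 = 1) ∧
            f = ∑ i : Fin n, x i * RatFunc.X ^ (i : ℕ)) ↔
        (∃ p : Polynomial ℝ, p.degree ≤ (n - 1 : ℕ) ∧
            f = algebraMap (Polynomial ℝ) (RatFunc ℝ) p)) ∧
    IsDiophantine {f : RatFunc ℝ | ∃ p : Polynomial ℝ, p.degree ≤ (n - 1 : ℕ) ∧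
        f = algebraMap (Polynomial ℝ) (RatFunc ℝ) p} := by
  obtain ⟨k, rfl⟩ := Nat.exists_eq_add_of_le' hn
  have hdeg (d : WithBot ℕ) : d < ↑(k + 1) ↔ d ≤ ↑(k + 1 - 1) := by
    cases d with
    | bot => simp
    | coe a => exact WithBot.coe_lt_coe.trans (Nat.lt_succ_iff.trans WithBot.coe_le_coe.symm)
  have hiff (f : RatFunc ℝ) := RatFunc.exists_sum_mul_X_pow_of_pow_add_pow_eq_one_iff
    (by norm_num) (by norm_num) (Real.exists_pow_eq_of_odd (by decide)) (n := 3) (N := k + 1) f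
  simp only [hdeg] at hiff
  refine ⟨hiff, ?_⟩
  rw [Set.ext fun f => (hiff f).symm]
  exact isDiophantine_setOf_sum_mul_of_pow_add_pow_eq_one 3 (k + 1) _
end

section
/- A rational function h ∈ ℝ(t) satisfies h(x) ≥ 0 for every real number x at which h is defined (i.e. every x ∈ ℝ that is not a root of the denominator of h) if and only if h is a sum of two squares in ℝ(t), i.e. there exist a, b ∈ ℝ(t) with h = a² + b². -/
/-!
A real polynomial `P ≥ 0` is a sum of two squares by induction on its degree: for a complex root
`z`, the factor `(X - Re z)² + (Im z)²` divides `P` (a real root of a nonnegative polynomial is a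
double root), the cofactor is again nonnegative, and the product of two sums of two squares is one.

For `h = p / q` in lowest terms, `h ≥ 0` wherever it is defined iff the polynomial `p q` is
nonnegative on `ℝ`, and then `h = p q / q²`. Conversely, `a² + b²` is nonnegative off the finitely
many poles of `a` and `b`, which suffices by continuity of `p q`.
-/

open Polynomial

theorem Continuous.nonneg_of_nonneg_off_finite {f : ℝ → ℝ} (hf : Continuous f) {s : Set ℝ}
    (hs : s.Finite) (H : ∀ x ∉ s, 0 ≤ f x) (x : ℝ) : 0 ≤ f x :=
  (isClosed_le continuous_const hf).closure_subset_iff.mpr H (hs.countable.dense_compl ℝ x)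

namespace Polynomial

theorem eval_nonneg_of_mul_left {q S : ℝ[X]} (hq0 : q ≠ 0) (hq : ∀ x, 0 ≤ q.eval x)
    (hqS : ∀ x, 0 ≤ (q * S).eval x) (x : ℝ) : 0 ≤ S.eval x := by
  refine S.continuous.nonneg_of_nonneg_off_finite (finite_setOfPred_isRoot hq0) (fun y hy => ?_) x
  have hqy : 0 < q.eval y := (hq y).lt_of_ne' hy
  exact nonneg_of_mul_nonneg_right (by simpa using hqS y) hqy

theorem sq_dvd_of_isRoot_of_nonneg {P : ℝ[X]} (hP : ∀ x, 0 ≤ P.eval x) {r : ℝ}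
    (hr : P.IsRoot r) : (X - C r) ^ 2 ∣ P := by
  rcases eq_or_ne P 0 with rfl | hP0
  · exact dvd_zero _
  have hmin : IsLocalMin (fun x => P.eval x) r :=
    Filter.Eventually.of_forall fun x => hr.eq_zero.trans_le (hP x)
  rw [← le_rootMultiplicity_iff hP0, Nat.succ_le_iff, one_lt_rootMultiplicity_iff_isRoot hP0]
  exact ⟨hr, by simpa [IsRoot, Polynomial.deriv] using hmin.deriv_eq_zero⟩

/-- For real `z` this is `(X - z)²`, otherwise the real quadratic with roots `z` and `z̄`. -/
theorem quadratic_dvd_of_aeval_eq_zero_of_nonneg {P : ℝ[X]} (hP : ∀ x, 0 ≤ P.eval x) {z : ℂ}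
    (hz : aeval z P = 0) : (X - C z.re) ^ 2 + C z.im ^ 2 ∣ P := by
  rcases eq_or_ne z.im 0 with him | him
  · have hr : P.IsRoot z.re := by
      rwa [← Complex.re_add_im z, him, Complex.ofReal_zero, zero_mul, add_zero,
        ← Complex.coe_algebraMap, aeval_algebraMap_apply_eq_algebraMap_eval, map_eq_zero] at hz
    simpa [him] using sq_dvd_of_isRoot_of_nonneg hP hr
  · convert P.quadratic_dvd_of_aeval_eq_zero_im_ne_zero hz him using 1
    rw [Complex.sq_norm, Complex.normSq_apply]
    simp only [map_add, map_mul, map_ofNat]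
    ring

theorem exists_eq_sq_add_sq_of_nonneg (P : ℝ[X]) (hP : ∀ x, 0 ≤ P.eval x) :
    ∃ A B : ℝ[X], P = A ^ 2 + B ^ 2 := by
  induction hn : P.natDegree using Nat.strong_induction_on generalizing P with
  | _ n ih =>
  rcases eq_or_ne n 0 with rfl | hn0
  · obtain ⟨c, rfl⟩ := natDegree_eq_zero.mp hn
    exact ⟨C √c, 0, by rw [← C_pow, Real.sq_sqrt (by simpa using hP 0)]; ring⟩
  have hP0 : P ≠ 0 := fun h0 => hn0 (by rw [← hn, h0, natDegree_zero])
  obtain ⟨z, hz⟩ := IsAlgClosed.exists_aeval_eq_zero ℂ P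
    (by rw [degree_eq_natDegree hP0]; exact_mod_cast hn ▸ hn0)
  set q : ℝ[X] := (X - C z.re) ^ 2 + C z.im ^ 2
  have hq : ∀ x, 0 ≤ q.eval x := fun x => by simp only [q, eval_add, eval_pow]; positivity
  have hq_monic : q.Monic := by simp only [q]; monicity!
  have hq_deg : q.natDegree = 2 := by simp only [q]; compute_degree!
  obtain ⟨S, rfl⟩ := quadratic_dvd_of_aeval_eq_zero_of_nonneg hP hz
  have hS0 : S ≠ 0 := right_ne_zero_of_mul hP0
  have hSdeg : S.natDegree < n := by
    rw [← hn, natDegree_mul hq_monic.ne_zero hS0, hq_deg]; omega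
  obtain ⟨A, B, rfl⟩ := ih _ hSdeg S (eval_nonneg_of_mul_left hq_monic.ne_zero hq hP) rfl
  exact ⟨_, _, sq_add_sq_mul_sq_add_sq⟩

end Polynomial

namespace RatFunc

section Eval

universe u

variable {K L : Type u} [Field K] [Field L] (f : K →+* L) (a : L)

theorem eval₂_denom_mul_ne_zero {x y : RatFunc K} (hx : (denom x).eval₂ f a ≠ 0)
    (hy : (denom y).eval₂ f a ≠ 0) : (denom (x * y)).eval₂ f a ≠ 0 := fun hxy => by
  simpa [hx, hy] using eval₂_eq_zero_of_dvd_of_eval₂_eq_zero f a (denom_mul_dvd x y) hxy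

theorem eval_sq_add_sq {x y : RatFunc K} (hx : (denom x).eval₂ f a ≠ 0)
    (hy : (denom y).eval₂ f a ≠ 0) :
    RatFunc.eval f a (x ^ 2 + y ^ 2) = RatFunc.eval f a x ^ 2 + RatFunc.eval f a y ^ 2 := by
  rw [sq, sq, eval_add f a (eval₂_denom_mul_ne_zero f a hx hx)
    (eval₂_denom_mul_ne_zero f a hy hy), eval_mul f a hx hx, eval_mul f a hy hy, sq, sq]

end Eval

theorem eq_sq_add_sq_of_num_mul_denom_eq {K : Type*} [Field K] {h : RatFunc K} {A B : K[X]}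
    (hAB : h.num * h.denom = A ^ 2 + B ^ 2) :
    h = (algebraMap _ _ A / algebraMap _ _ h.denom) ^ 2 +
      (algebraMap _ _ B / algebraMap _ _ h.denom) ^ 2 := by
  rw [div_pow, div_pow, ← add_div, ← map_pow, ← map_pow, ← map_add, ← hAB, map_mul, sq,
    mul_div_mul_right _ _ (algebraMap_ne_zero h.denom_ne_zero), num_div_denom]

theorem eval_id (h : RatFunc ℝ) (x : ℝ) :
    eval (RingHom.id ℝ) x h = h.num.eval x / h.denom.eval x := by
  simp [eval, eval₂_id]

theorem num_mul_denom_eval_nonneg_iff (h : RatFunc ℝ) (x : ℝ) :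
    0 ≤ (h.num * h.denom).eval x ↔
      (h.denom.eval x ≠ 0 → 0 ≤ eval (RingHom.id ℝ) x h) := by
  rcases eq_or_ne (h.denom.eval x) 0 with hx | hx
  · simp [hx]
  have : (h.num * h.denom).eval x = eval (RingHom.id ℝ) x h * h.denom.eval x ^ 2 := by
    rw [eval_id, Polynomial.eval_mul]; field_simp
  rw [this, mul_nonneg_iff_of_pos_right (by positivity)]
  exact (imp_iff_right hx).symm

end RatFunc

theorem nonneg_iff_sum_two_squares (h : RatFunc ℝ) :
    (∀ x : ℝ, h.denom.eval x ≠ 0 → 0 ≤ RatFunc.eval (RingHom.id ℝ) x h) ↔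
    ∃ a b : RatFunc ℝ, h = a ^ 2 + b ^ 2 := by
  simp only [← RatFunc.num_mul_denom_eval_nonneg_iff]
  constructor
  · intro H
    obtain ⟨A, B, hAB⟩ := (h.num * h.denom).exists_eq_sq_add_sq_of_nonneg H
    exact ⟨_, _, RatFunc.eq_sq_add_sq_of_num_mul_denom_eq hAB⟩
  · rintro ⟨a, b, rfl⟩
    refine (Polynomial.continuous _).nonneg_of_nonneg_off_finite
      (finite_setOfPred_isRoot (mul_ne_zero a.denom_ne_zero b.denom_ne_zero)) fun x hx => ?_
    have hab : a.denom.eval x ≠ 0 ∧ b.denom.eval x ≠ 0 := by simpa using hx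
    rw [RatFunc.num_mul_denom_eval_nonneg_iff, RatFunc.eval_sq_add_sq _ _ hab.1 hab.2]
    exact fun _ => by positivity
end

section
/- For every rational function g ∈ ℝ(t), the set L₁(g) of all f ∈ ℝ(t) such that (g − f)(x) ≥ 0 for every real number x at which g − f is defined, is a diophantine subset of ℝ(t). -/
open MvPolynomial in
lemma isDiophantine_setOf_sub_eq_sq_add_sq {R : Type*} [CommRing R] (g : R) :
    IsDiophantine {f : R | ∃ a b : R, g - f = a ^ 2 + b ^ 2} := by
  let P : MvPolynomial (Fin 3) R := X 0 + X 1 ^ 2 + X 2 ^ 2 - C g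
  refine ⟨1, 2, fun _ => P, fun f => ?_⟩
  have heval (y : Fin 2 → R) : eval (Fin.cons f y) P = f + y 0 ^ 2 + y 1 ^ 2 - g := by
    simp only [P, map_sub, map_add, map_pow, eval_X, eval_C]
    rfl
  simp only [Set.mem_ofPred_eq, heval, forall_const]
  constructor
  · rintro ⟨a, b, hab⟩
    refine ⟨![a, b], ?_⟩
    simp only [Matrix.cons_val_zero, Matrix.cons_val_one]
    linear_combination -hab
  · rintro ⟨y, hy⟩
    exact ⟨y 0, y 1, by linear_combination -hy⟩

lemma Continuous.nonneg_of_nonneg_off_countable {f : ℝ → ℝ} (hf : Continuous f) {s : Set ℝ}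
    (hs : s.Countable) (h : ∀ x ∉ s, 0 ≤ f x) (x : ℝ) : 0 ≤ f x := by
  have hsub : sᶜ ⊆ {x | 0 ≤ f x} := h
  rw [← (isClosed_le continuous_const hf).closure_subset_iff, (hs.dense_compl ℝ).closure_eq]
    at hsub
  exact hsub (Set.mem_univ x)

open Polynomial

namespace Polynomial

lemma eval_nonneg_of_nonneg_off_roots {p q : ℝ[X]} (hq : q ≠ 0)
    (h : ∀ x, q.eval x ≠ 0 → 0 ≤ p.eval x) (x : ℝ) : 0 ≤ p.eval x :=
  p.continuous.nonneg_of_nonneg_off_countable (q.finite_setOfPred_isRoot hq).countable h x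

lemma eval_nonneg_of_eval_mul_nonneg {q d : ℝ[X]} (hq : q ≠ 0) (hq_nonneg : ∀ x, 0 ≤ q.eval x)
    (h : ∀ x, 0 ≤ (q * d).eval x) (x : ℝ) : 0 ≤ d.eval x := by
  refine eval_nonneg_of_nonneg_off_roots hq (fun y hy => ?_) x
  have hqd := h y
  rw [eval_mul] at hqd
  exact nonneg_of_mul_nonneg_right hqd (lt_of_le_of_ne (hq_nonneg y) (Ne.symm hy))

lemma sq_X_sub_C_dvd_of_nonneg_of_isRoot {p : ℝ[X]} (hp : ∀ x, 0 ≤ p.eval x) {a : ℝ}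
    (ha : p.IsRoot a) : (X - C a) ^ 2 ∣ p := by
  rcases eq_or_ne p 0 with rfl | hp0
  · simp
  have hmin : IsLocalMin (fun x => p.eval x) a :=
    Filter.Eventually.of_forall fun y => by simpa [ha.eq_zero] using hp y
  have hderiv : p.derivative.IsRoot a := by
    simpa [Polynomial.deriv] using hmin.deriv_eq_zero
  exact (le_rootMultiplicity_iff hp0).1 ((one_lt_rootMultiplicity_iff_isRoot hp0).2 ⟨ha, hderiv⟩)

lemma exists_sq_add_sq_dvd_of_nonneg {p : ℝ[X]} (hp : ∀ x, 0 ≤ p.eval x)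
    (hdeg : 0 < p.natDegree) : ∃ a b : ℝ, (X - C a) ^ 2 + C b ^ 2 ∣ p := by
  obtain ⟨z, hz⟩ : ∃ z : ℂ, aeval z p = 0 :=
    IsAlgClosed.exists_aeval_eq_zero ℂ p (natDegree_pos_iff_degree_pos.1 hdeg).ne'
  by_cases him : z.im = 0
  · have hz_re : z = algebraMap ℝ ℂ z.re := Complex.ext (by simp) (by simp [him])
    have hroot : p.IsRoot z.re := by
      rwa [hz_re, aeval_algebraMap_apply, Complex.coe_algebraMap, Complex.ofReal_eq_zero,
        coe_aeval_eq_eval] at hz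
    exact ⟨z.re, 0, by simpa using sq_X_sub_C_dvd_of_nonneg_of_isRoot hp hroot⟩
  · refine ⟨z.re, z.im, ?_⟩
    convert p.quadratic_dvd_of_aeval_eq_zero_im_ne_zero hz him using 1
    rw [Complex.sq_norm, Complex.normSq_apply]
    simp only [C_add, C_mul, map_ofNat]
    ring

theorem exists_eq_sq_add_sq_of_nonneg_s11 (p : ℝ[X]) (hp : ∀ x, 0 ≤ p.eval x) :
    ∃ a b : ℝ[X], p = a ^ 2 + b ^ 2 := by
  induction hn : p.natDegree using Nat.strong_induction_on generalizing p with
  | _ n ih =>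
  rcases Nat.eq_zero_or_pos n with rfl | hpos
  · obtain ⟨c, rfl⟩ : ∃ c, p = C c := ⟨_, eq_C_of_natDegree_eq_zero hn⟩
    have hc : 0 ≤ c := by simpa using hp 0
    exact ⟨C √c, 0, by rw [← C_pow, Real.sq_sqrt hc]; ring⟩
  obtain ⟨a, b, d, rfl⟩ := exists_sq_add_sq_dvd_of_nonneg hp (hn ▸ hpos)
  set q := (X - C a) ^ 2 + C b ^ 2
  have hq_deg : q.natDegree = 2 := by
    simp only [q]
    compute_degree!
  have hq_nonneg (x : ℝ) : 0 ≤ q.eval x := by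
    simp only [q, eval_add, eval_pow, eval_sub, eval_X, eval_C]
    positivity
  have hq0 : q ≠ 0 := ne_zero_of_natDegree_gt (n := 0) (by omega)
  have hd0 : d ≠ 0 := by
    rintro rfl
    rw [mul_zero, natDegree_zero] at hn
    omega
  have hd_deg : d.natDegree < n := by
    rw [← hn, natDegree_mul hq0 hd0, hq_deg]
    omega
  have hd_nonneg := eval_nonneg_of_eval_mul_nonneg hq0 hq_nonneg hp
  obtain ⟨u, v, rfl⟩ := ih _ hd_deg d hd_nonneg rfl
  exact ⟨_, _, sq_add_sq_mul_sq_add_sq⟩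

end Polynomial

namespace RatFunc

lemma eval_id_eq_num_mul_denom_div_sq (h : RatFunc ℝ) (x : ℝ) :
    h.eval (RingHom.id ℝ) x = (h.num * h.denom).eval x / h.denom.eval x ^ 2 := by
  change h.num.eval x / h.denom.eval x = _
  rcases eq_or_ne (h.denom.eval x) 0 with hx | hx
  · simp [hx]
  · rw [Polynomial.eval_mul]
    field_simp

lemma forall_eval_nonneg_iff (h : RatFunc ℝ) :
    (∀ x, h.denom.eval x ≠ 0 → 0 ≤ h.eval (RingHom.id ℝ) x) ↔
      ∀ x, 0 ≤ (h.num * h.denom).eval x := by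
  simp only [eval_id_eq_num_mul_denom_div_sq]
  refine ⟨fun hh => eval_nonneg_of_nonneg_off_roots h.denom_ne_zero fun x hx => ?_,
    fun hN x _ => div_nonneg (hN x) (sq_nonneg _)⟩
  have hx' := hh x hx
  rwa [le_div_iff₀ (by positivity), zero_mul] at hx'

lemma num_mul_denom_nonneg_of_eq_div {h : RatFunc ℝ} {p c : ℝ[X]} (hc : c ≠ 0)
    (hpc : ∀ x, 0 ≤ (p * c).eval x) (hh : h = algebraMap _ _ p / algebraMap _ _ c) (x : ℝ) :
    0 ≤ (h.num * h.denom).eval x := by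
  have hcross : h.num * c = p * h.denom := (num_mul_eq_mul_denom_iff hc).2 hh
  refine eval_nonneg_of_eval_mul_nonneg (q := c ^ 2) (pow_ne_zero 2 hc)
    (fun y => by rw [Polynomial.eval_pow]; positivity) (fun y => ?_) x
  have : c ^ 2 * (h.num * h.denom) = h.denom ^ 2 * (p * c) := by
    linear_combination (c * h.denom) * hcross
  rw [this, Polynomial.eval_mul]
  exact mul_nonneg (by rw [Polynomial.eval_pow]; positivity) (hpc y)

theorem nonneg_iff_exists_eq_sq_add_sq (h : RatFunc ℝ) :
    (∀ x, h.denom.eval x ≠ 0 → 0 ≤ h.eval (RingHom.id ℝ) x) ↔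
      ∃ a b : RatFunc ℝ, h = a ^ 2 + b ^ 2 := by
  rw [forall_eval_nonneg_iff]
  constructor
  · intro hN
    obtain ⟨a, b, hab⟩ := (h.num * h.denom).exists_eq_sq_add_sq_of_nonneg_s11 hN
    refine ⟨algebraMap _ _ a / algebraMap _ _ h.denom, algebraMap _ _ b / algebraMap _ _ h.denom,
      ?_⟩
    rw [div_pow, div_pow, ← add_div, ← map_pow, ← map_pow, ← map_pow, ← map_add, ← hab,
      ← num_mul_eq_mul_denom_iff (pow_ne_zero 2 h.denom_ne_zero)]
    ring
  · rintro ⟨A, B, rfl⟩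
    refine num_mul_denom_nonneg_of_eq_div (p := (A.num * B.denom) ^ 2 + (B.num * A.denom) ^ 2)
      (c := (A.denom * B.denom) ^ 2) (pow_ne_zero 2 (mul_ne_zero A.denom_ne_zero B.denom_ne_zero))
      (fun x => by
        simp only [Polynomial.eval_mul, Polynomial.eval_add, Polynomial.eval_pow]
        positivity) ?_
    have hA := algebraMap_ne_zero A.denom_ne_zero
    have hB := algebraMap_ne_zero B.denom_ne_zero
    conv_lhs => rw [← num_div_denom A, ← num_div_denom B]
    simp only [map_add, map_mul, map_pow]
    field_simp

end RatFunc

theorem L1_diophantine (g : RatFunc ℝ) :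
    IsDiophantine {f : RatFunc ℝ |
      ∀ x : ℝ, (g - f).denom.eval x ≠ 0 → 0 ≤ RatFunc.eval (RingHom.id ℝ) x (g - f)} := by
  simpa only [RatFunc.nonneg_iff_exists_eq_sq_add_sq] using isDiophantine_setOf_sub_eq_sq_add_sq g
end

section
/- Let g ∈ ℝ[t] be a polynomial, c ∈ ℝ a constant, and f, a, b ∈ ℝ(t) rational functions such that c²·g² − f² = a² + b² in ℝ(t). Then f has no real pole; that is, the denominator of f (in lowest terms) has no real root. -/
open Polynomial

private lemma sos_pow_dvd (x : ℝ) :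
    ∀ (k : ℕ) (P Q R : Polynomial ℝ),
      (X - C x) ^ (2 * k) ∣ P ^ 2 + Q ^ 2 + R ^ 2 → (X - C x) ^ k ∣ P := by
  intro k
  induction k with
  | zero => intro P Q R _; simp
  | succ k ih =>
    intro P Q R hdvd
    have h1 : (X - C x) ∣ P ^ 2 + Q ^ 2 + R ^ 2 :=
      dvd_trans (dvd_pow_self _ (by omega)) hdvd
    have hroot : (P ^ 2 + Q ^ 2 + R ^ 2).eval x = 0 := dvd_iff_isRoot.mp h1
    simp only [eval_add, eval_pow] at hroot
    have hP0 : P.eval x = 0 := by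
      nlinarith [sq_nonneg (P.eval x), sq_nonneg (Q.eval x), sq_nonneg (R.eval x)]
    have hQ0 : Q.eval x = 0 := by
      nlinarith [sq_nonneg (P.eval x), sq_nonneg (Q.eval x), sq_nonneg (R.eval x)]
    have hR0 : R.eval x = 0 := by
      nlinarith [sq_nonneg (P.eval x), sq_nonneg (Q.eval x), sq_nonneg (R.eval x)]
    obtain ⟨P1, hP⟩ := dvd_iff_isRoot.mpr hP0
    obtain ⟨Q1, hQ⟩ := dvd_iff_isRoot.mpr hQ0
    obtain ⟨R1, hR⟩ := dvd_iff_isRoot.mpr hR0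
    have hne : (X - C x) ^ 2 ≠ 0 := pow_ne_zero _ (X_sub_C_ne_zero x)
    have hfac : P ^ 2 + Q ^ 2 + R ^ 2 = (X - C x) ^ 2 * (P1 ^ 2 + Q1 ^ 2 + R1 ^ 2) := by
      rw [hP, hQ, hR]; ring
    have hdvd' : (X - C x) ^ (2 * k) ∣ P1 ^ 2 + Q1 ^ 2 + R1 ^ 2 := by
      have h2 : (X - C x) ^ 2 * (X - C x) ^ (2 * k) ∣
          (X - C x) ^ 2 * (P1 ^ 2 + Q1 ^ 2 + R1 ^ 2) := by
        rw [← hfac, ← pow_add]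
        have h3 : 2 + 2 * k = 2 * (k + 1) := by ring
        rw [h3]; exact hdvd
      exact (mul_dvd_mul_iff_left hne).mp h2
    obtain ⟨P2, hP2⟩ := ih P1 Q1 R1 hdvd'
    exact ⟨P2, by rw [hP, hP2, pow_succ]; ring⟩

theorem no_real_pole_of_sq_bounded (g : Polynomial ℝ) (c : ℝ) (f a b : RatFunc ℝ)
    (h : RatFunc.C c ^ 2 * (algebraMap (Polynomial ℝ) (RatFunc ℝ) g) ^ 2 - f ^ 2
        = a ^ 2 + b ^ 2) :
    ∀ x : ℝ, f.denom.eval x ≠ 0 := by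
  intro x hx
  have hf0 : f ≠ 0 := by
    rintro rfl
    rw [RatFunc.denom_zero] at hx
    simp at hx
  set q := f.denom with hq
  set qa := a.denom with hqa
  set qb := b.denom with hqb
  have hqne : q ≠ 0 := f.denom_ne_zero
  have hqane : qa ≠ 0 := a.denom_ne_zero
  have hqbne : qb ≠ 0 := b.denom_ne_zero
  have hmulf : f * algebraMap (Polynomial ℝ) (RatFunc ℝ) q = algebraMap _ _ f.num := by
    conv_lhs => rw [← f.num_div_denom]
    exact div_mul_cancel₀ _ (RatFunc.algebraMap_ne_zero f.denom_ne_zero)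
  have hmula : a * algebraMap (Polynomial ℝ) (RatFunc ℝ) qa = algebraMap _ _ a.num := by
    conv_lhs => rw [← a.num_div_denom]
    exact div_mul_cancel₀ _ (RatFunc.algebraMap_ne_zero a.denom_ne_zero)
  have hmulb : b * algebraMap (Polynomial ℝ) (RatFunc ℝ) qb = algebraMap _ _ b.num := by
    conv_lhs => rw [← b.num_div_denom]
    exact div_mul_cancel₀ _ (RatFunc.algebraMap_ne_zero b.denom_ne_zero)
  set P := f.num * qa * qb with hP
  set A := a.num * q * qb with hA
  set B := b.num * q * qa with hB
  set d := q * qa * qb with hd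
  have key : (C c * g * d) ^ 2 = P ^ 2 + A ^ 2 + B ^ 2 := by
    apply RatFunc.algebraMap_injective
    have expand : (RatFunc.C c * algebraMap (Polynomial ℝ) (RatFunc ℝ) g *
        (algebraMap _ _ q * algebraMap _ _ qa * algebraMap _ _ qb)) ^ 2 =
        (f * algebraMap (Polynomial ℝ) (RatFunc ℝ) q * algebraMap _ _ qa * algebraMap _ _ qb) ^ 2
        + (a * algebraMap (Polynomial ℝ) (RatFunc ℝ) qa * algebraMap _ _ q * algebraMap _ _ qb) ^ 2
        + (b * algebraMap (Polynomial ℝ) (RatFunc ℝ) qb * algebraMap _ _ q * algebraMap _ _ qa) ^ 2 := by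
      linear_combination (algebraMap (Polynomial ℝ) (RatFunc ℝ) q * algebraMap (Polynomial ℝ) (RatFunc ℝ) qa * algebraMap (Polynomial ℝ) (RatFunc ℝ) qb) ^ 2 * h
    rw [hmulf, hmula, hmulb] at expand
    rw [hP, hA, hB, hd]
    simp only [map_add, map_mul, map_pow, RatFunc.algebraMap_C]
    rw [expand]
  have hdne : d ≠ 0 := mul_ne_zero (mul_ne_zero hqne hqane) hqbne
  set m := rootMultiplicity x d with hm
  have hdvd2m : (X - C x) ^ (2 * m) ∣ P ^ 2 + A ^ 2 + B ^ 2 := by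
    rw [← key]
    have h1 : (X - C x) ^ m ∣ d := pow_rootMultiplicity_dvd d x
    calc (X - C x) ^ (2 * m) = ((X - C x) ^ m) ^ 2 := by rw [← pow_mul, mul_comm]
      _ ∣ d ^ 2 := pow_dvd_pow_of_dvd h1 2
      _ ∣ (C c * g * d) ^ 2 := pow_dvd_pow_of_dvd (dvd_mul_left d _) 2
  have hdvdP : (X - C x) ^ m ∣ P := sos_pow_dvd x m P A B hdvd2m
  have hnumne : f.num ≠ 0 := RatFunc.num_ne_zero hf0
  have hPne : P ≠ 0 := mul_ne_zero (mul_ne_zero hnumne hqane) hqbne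
  have hle : m ≤ rootMultiplicity x P := (le_rootMultiplicity_iff hPne).mpr hdvdP
  -- num has no root at x, by coprimality
  have hnumroot : f.num.eval x ≠ 0 := by
    intro h0
    obtain ⟨u, v, huv⟩ := f.isCoprime_num_denom
    have := congrArg (eval x) huv
    simp only [eval_add, eval_mul, eval_one, h0, hx, ← hq] at this
    simp at this
  have hrmnum : rootMultiplicity x f.num = 0 := rootMultiplicity_eq_zero hnumroot
  have hrmP : rootMultiplicity x P = rootMultiplicity x qa + rootMultiplicity x qb := by
    rw [hP, rootMultiplicity_mul (by rw [← hP]; exact hPne),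
      rootMultiplicity_mul (mul_ne_zero hnumne hqane), hrmnum]
    ring
  have hrmd : m = rootMultiplicity x q + rootMultiplicity x qa + rootMultiplicity x qb := by
    rw [hm, hd, rootMultiplicity_mul (by rw [← hd]; exact hdne),
      rootMultiplicity_mul (mul_ne_zero hqne hqane)]
  have hqpos : 0 < rootMultiplicity x q := (rootMultiplicity_pos hqne).mpr hx
  omega
end

section
/- Let X be a Noetherian topological space and D ⊆ X any subset. Then there exist countably many closed irreducible subsets W₀, W₁, W₂, … of X such that D ⊆ ⋃_i W_i and, for every i, the set D ∩ W_i is Zariski very dense in W_i, i.e. D ∩ W_i is not contained in any countable union of closed subsets of W_i each of which is a proper subset of W_i. -/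
/-!
Noetherian induction on the closed set `Z`. If `D` is very dense in `Z`, then `Z` is irreducible
(a splitting `Z = Z₁ ∪ Z₂` into proper closed pieces would witness the failure of very density),
so `Z` covers `D ∩ Z` by itself. Otherwise `D ∩ Z` lies in countably many proper closed subsets
of `Z`, each of which is covered by the induction hypothesis.
-/

/-- A subset `D` of an (irreducible closed) set `W` in a topological space `X` is
*Zariski very dense* in `W` if `D ∩ W` is not contained in any countable union of
closed subsets of `X` that are proper subsets of `W`. -/
def ZariskiVeryDense {X : Type*} [TopologicalSpace X] (D W : Set X) : Prop :=
  ¬ ∃ (κ : Type) (_ : Countable κ) (V : κ → Set X),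
      (∀ j, IsClosed (V j) ∧ V j ⊂ W) ∧ D ∩ W ⊆ ⋃ j, V j

open TopologicalSpace

section

variable {X : Type*} [TopologicalSpace X]

theorem ZariskiVeryDense.isIrreducible {D Z : Set X} (hZ : IsClosed Z)
    (h : ZariskiVeryDense D Z) : IsIrreducible Z := by
  refine ⟨?nonempty, isPreirreducible_iff_isClosed_union_isClosed.2 fun Z₁ Z₂ h₁ h₂ hZ₁₂ => ?_⟩
  case nonempty =>
    by_contra hempty
    refine h ⟨Empty, inferInstance, Empty.elim, Empty.rec, ?_⟩
    simp [Set.not_nonempty_iff_eq_empty.1 hempty]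
  by_contra! hsplit
  refine h ⟨Bool, inferInstance, fun b => Z ∩ cond b Z₁ Z₂, fun b => ?_, ?_⟩
  · cases b
    · exact ⟨hZ.inter h₂, Set.inter_ssubset_left_iff.2 hsplit.2⟩
    · exact ⟨hZ.inter h₁, Set.inter_ssubset_left_iff.2 hsplit.1⟩
  · intro x ⟨_, hx⟩
    rcases hZ₁₂ hx with hx₁ | hx₂
    · exact Set.mem_iUnion.2 ⟨true, hx, hx₁⟩
    · exact Set.mem_iUnion.2 ⟨false, hx, hx₂⟩

def HasCountableVeryDenseCover (D S : Set X) : Prop :=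
  ∃ (ι : Type) (_ : Countable ι) (W : ι → Set X),
    (∀ i, IsClosed (W i) ∧ IsIrreducible (W i) ∧ ZariskiVeryDense D (W i)) ∧
    D ∩ S ⊆ ⋃ i, W i

namespace HasCountableVeryDenseCover

variable {D : Set X}

theorem mono {S T : Set X} (h : HasCountableVeryDenseCover D T) (hST : D ∩ S ⊆ T) :
    HasCountableVeryDenseCover D S := by
  obtain ⟨ι, hι, W, hW, hcover⟩ := h
  exact ⟨ι, hι, W, hW, fun x hx => hcover ⟨hx.1, hST hx⟩⟩

theorem iUnion {κ : Type} [Countable κ] {S : κ → Set X}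
    (h : ∀ j, HasCountableVeryDenseCover D (S j)) :
    HasCountableVeryDenseCover D (⋃ j, S j) := by
  choose ι hι W hW hcover using h
  refine ⟨Σ j, ι j, inferInstance, fun p => W p.1 p.2, fun p => hW p.1 p.2, ?_⟩
  rintro x ⟨hxD, hxS⟩
  obtain ⟨j, hj⟩ := Set.mem_iUnion.1 hxS
  obtain ⟨i, hi⟩ := Set.mem_iUnion.1 (hcover j ⟨hxD, hj⟩)
  exact Set.mem_iUnion.2 ⟨⟨j, i⟩, hi⟩

theorem of_zariskiVeryDense {Z : Set X} (hZ : IsClosed Z) (h : ZariskiVeryDense D Z) :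
    HasCountableVeryDenseCover D Z :=
  ⟨Unit, inferInstance, fun _ => Z, fun _ => ⟨hZ, h.isIrreducible hZ, h⟩,
    fun _ hx => Set.mem_iUnion.2 ⟨(), hx.2⟩⟩

theorem of_isClosed [NoetherianSpace X] (D : Set X) {Z : Set X} (hZ : IsClosed Z) :
    HasCountableVeryDenseCover D Z := by
  lift Z to Closeds X using hZ
  induction Z using WellFoundedLT.induction with
  | _ Z ih =>
  by_cases hdense : ZariskiVeryDense D Z
  · exact of_zariskiVeryDense Z.isClosed hdense
  obtain ⟨κ, _, V, hV, hcover⟩ := not_not.1 hdense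
  have hV_lt (j : κ) : (⟨V j, (hV j).1⟩ : Closeds X) < Z := (hV j).2
  exact (iUnion fun j => ih _ (hV_lt j)).mono hcover

end HasCountableVeryDenseCover

end

theorem exists_countable_irreducible_cover_very_dense
    (X : Type*) [TopologicalSpace X] [TopologicalSpace.NoetherianSpace X]
    (D : Set X) :
    ∃ (ι : Type) (_ : Countable ι) (W : ι → Set X),
      (∀ i, IsClosed (W i) ∧ IsIrreducible (W i)) ∧
      D ⊆ ⋃ i, W i ∧
      ∀ i, ZariskiVeryDense D (W i) := by
  obtain ⟨ι, hι, W, hW, hcover⟩ := HasCountableVeryDenseCover.of_isClosed D isClosed_univ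
  exact ⟨ι, hι, W, fun i => ⟨(hW i).1, (hW i).2.1⟩, fun x hx => hcover ⟨hx, trivial⟩,
    fun i => (hW i).2.2⟩
end
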